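/- Let I be a proper nonzero monomial ideal of S = K[x_1,…,x_n]. Then for every integer s ≥ 1 and every vector a ∈ ℕ^n with |a| ≤ γ(I)·s − 1, one has √(\overline{I^s} : x^a) = √I, where \overline{I^s} denotes the integral closure of I^s. -/

import Mathlib

open MvPolynomial

/-! Setting: `K` a field, `S = K[x_1, …, x_n]` realized as `MvPolynomial (Fin n) K`. -/

/-- `I` is a monomial ideal: an ideal generated by monomials. -/
def IsMonomialIdeal {K : Type} [Field K] {n : ℕ} (I : Ideal (MvPolynomial (Fin n) K)) : Prop :=
  ∃ A : Set (Fin n →₀ ℕ), I = Ideal.span ((fun a => (monomial a (1 : K))) '' A)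

/-- `I` is a squarefree monomial ideal: an ideal generated by squarefree monomials. -/
def IsSquarefreeMonomialIdeal {K : Type} [Field K] {n : ℕ}
    (I : Ideal (MvPolynomial (Fin n) K)) : Prop :=
  ∃ A : Set (Fin n →₀ ℕ), (∀ a ∈ A, ∀ i, a i ≤ 1) ∧
    I = Ideal.span ((fun a => (monomial a (1 : K))) '' A)

/-- Exponent vectors of the minimal monomial generators `G(I)` of a monomial ideal `I`:
monomials of `I` none of whose proper monomial divisors lies in `I`. -/
def minGens {K : Type} [Field K] {n : ℕ} (I : Ideal (MvPolynomial (Fin n) K)) :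
    Set (Fin n →₀ ℕ) :=
  {a | monomial a (1 : K) ∈ I ∧ ∀ b : Fin n →₀ ℕ, b ≤ a → b ≠ a → monomial b (1 : K) ∉ I}

/-- `γ(I) = min{deg_{x_j}(u) : 1 ≤ j ≤ n, u ∈ G(I), x_j ∣ u}`. -/
noncomputable def gammaI {K : Type} [Field K] {n : ℕ}
    (I : Ideal (MvPolynomial (Fin n) K)) : ℕ :=
  sInf {d | ∃ a ∈ minGens I, ∃ j : Fin n, a j ≠ 0 ∧ a j = d}

/-- The `m`-th symbolic power `I^(m) = ⋂_{p ∈ Min(I)} Ker(S → (S/I^m)_p)`; the kernel of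
`S → (S/I^m)_p` is the contraction of `I^m S_p` from the localization `S_p`. -/
noncomputable def symbolicPower {K : Type} [Field K] {n : ℕ}
    (I : Ideal (MvPolynomial (Fin n) K)) (m : ℕ) : Ideal (MvPolynomial (Fin n) K) :=
  ⨅ (p : Ideal (MvPolynomial (Fin n) K)) (hp : p ∈ I.minimalPrimes),
    Ideal.comap (algebraMap (MvPolynomial (Fin n) K)
        (Localization (@Ideal.primeCompl _ _ p hp.1.1)))
      ((I ^ m).map (algebraMap (MvPolynomial (Fin n) K)
        (Localization (@Ideal.primeCompl _ _ p hp.1.1))))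

/-- The integral closure of an ideal `I`: the (ideal generated by the) set of elements `f`
satisfying an equation `f^k + c_1 f^(k-1) + ⋯ + c_k = 0` with `c_i ∈ I^i`.  (This set is
already an ideal, so taking the span is harmless.) -/
noncomputable def intCl {K : Type} [Field K] {n : ℕ} (I : Ideal (MvPolynomial (Fin n) K)) :
    Ideal (MvPolynomial (Fin n) K) :=
  Ideal.span {f | ∃ k : ℕ, 1 ≤ k ∧ ∃ c : ℕ → MvPolynomial (Fin n) K,
    (∀ i ∈ Finset.Icc 1 k, c i ∈ I ^ i) ∧
    f ^ k + ∑ i ∈ Finset.Icc 1 k, c i * f ^ (k - i) = 0}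

/-- The analytic spread `ℓ(I)`: the Krull dimension of `R(I)/m R(I)`, where `R(I) ⊆ S[t]`
is the Rees algebra of `I` and `m = (x_1, …, x_n)`. -/
noncomputable def analyticSpread {K : Type} [Field K] {n : ℕ}
    (I : Ideal (MvPolynomial (Fin n) K)) : ℕ :=
  ENat.toNat (WithBot.unbotD 0 (ringKrullDim ((reesAlgebra I) ⧸
    (Ideal.map (algebraMap (MvPolynomial (Fin n) K) (reesAlgebra I))
      (Ideal.span (Set.range (X : Fin n → MvPolynomial (Fin n) K)))))))

/-- The height of an ideal `I`: the minimal height of a prime containing `I`. -/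
noncomputable def idealHeight {K : Type} [Field K] {n : ℕ}
    (I : Ideal (MvPolynomial (Fin n) K)) : ℕ :=
  ENat.toNat (⨅ (p : PrimeSpectrum (MvPolynomial (Fin n) K)) (_ : I ≤ p.asIdeal),
    Order.height p)

/-! Castelnuovo–Mumford regularity via graded Betti numbers.  For a graded module
`M = I/J` (with `I`, `J` homogeneous ideals, `J ⊆ I`; take `J = ⊥` for `M = I`),
`β_{i,j}(M) = dim_K Tor_i^S(M, K)_j`, and `Tor_i^S(M, K)` is computed as the `i`-th homology
of `M ⊗_S K_•(x_1, …, x_n)`, the Koszul complex. The degree-`j` strand of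
`M ⊗ K_i` is `⊕_{T ⊆ [n], |T| = i} M_{j-i} · e_T`; we encode its elements as functions
from `Finset (Fin n)` to `S`, supported on the `i`-element subsets, with values homogeneous
of degree `j - i` lying in `I` (taken modulo componentwise membership in `J`). -/

/-- The Koszul differential `e_T ⊗ f ↦ ∑_{t ∈ T} (-1)^{|{u ∈ T : u < t}|} e_{T∖{t}} ⊗ x_t f`,
written for chains `c : Finset (Fin n) → S`. -/
noncomputable def koszulD {K : Type} [Field K] {n : ℕ}
    (c : Finset (Fin n) → MvPolynomial (Fin n) K) :
    Finset (Fin n) → MvPolynomial (Fin n) K :=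
  fun T => ∑ t ∈ Tᶜ, ((-1 : K) ^ (T.filter (fun u => u < t)).card) • (X t * c (insert t T))

/-- A chain of the degree-`j` strand of `I ⊗ K_i`: supported on `i`-element subsets, with
values in `I` homogeneous of degree `j - i`. -/
def IsKoszulChain {K : Type} [Field K] {n : ℕ} (I : Ideal (MvPolynomial (Fin n) K))
    (i j : ℕ) (c : Finset (Fin n) → MvPolynomial (Fin n) K) : Prop :=
  (∀ T : Finset (Fin n), T.card = i →
      c T ∈ I ∧ c T ∈ homogeneousSubmodule (Fin n) K (j - i)) ∧
  (∀ T : Finset (Fin n), T.card ≠ i → c T = 0)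

/-- `β_{i,j}(I/J) ≠ 0`: the degree-`j` strand of the Koszul homology
`Tor_i((I/J), K)` is nonzero, i.e. there is a cycle (modulo `J`) which is not a
boundary (modulo `J`). -/
def BettiNonzero {K : Type} [Field K] {n : ℕ} (I J : Ideal (MvPolynomial (Fin n) K))
    (i j : ℕ) : Prop :=
  ∃ c : Finset (Fin n) → MvPolynomial (Fin n) K,
    IsKoszulChain I i j c ∧ (∀ T, koszulD c T ∈ J) ∧
      ¬ ∃ b : Finset (Fin n) → MvPolynomial (Fin n) K,
          IsKoszulChain I (i + 1) j b ∧ ∀ T, c T - koszulD b T ∈ J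

/-- The Castelnuovo–Mumford regularity `reg(I/J) = max{j - i : β_{i,j}(I/J) ≠ 0}` of the
graded module `I/J` (use `J = ⊥` for the module `I` itself), with `reg 0 = ⊥ = -∞`. -/
noncomputable def cmReg {K : Type} [Field K] {n : ℕ}
    (I J : Ideal (MvPolynomial (Fin n) K)) : WithBot ℤ :=
  sSup {r : WithBot ℤ | ∃ i j : ℕ, BettiNonzero I J i j ∧ r = ((j : ℤ) - (i : ℤ) : ℤ)}

/-! Suppose `f x^a ∈ \overline{I^s}` but `f ∉ √I`. Then some monomial `x^c` of `f` lies outside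
`√I`. Giving weight `1` to the variables outside the support of `c` and weight `0` to the others
yields a monomial valuation `v` with `v(f) = 0`, `v(x^a) ≤ |a|` and `v ≥ γ(I)` on `I`. Valuation
ideals are integrally closed, so `v ≥ γ(I) s` on `\overline{I^s}`, contradicting
`|a| < γ(I) s`. Conversely `I^s ⊆ \overline{I^s} ⊆ (\overline{I^s} : x^a)`. -/

section WeightedOrder

variable {σ R : Type*} [CommRing R] [IsDomain R]

noncomputable def MvPowerSeries.weightedOrderAddValuation (w : σ → ℕ) :
    AddValuation (MvPowerSeries σ R) ℕ∞ :=
  AddValuation.of (MvPowerSeries.weightedOrder w) (MvPowerSeries.weightedOrder_zero w)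
    (MvPowerSeries.weightedOrder_one w) (fun _ _ => MvPowerSeries.min_weightedOrder_le_add w)
    (MvPowerSeries.weightedOrder_mul w)

/-- The monomial valuation of weight `w`: the least `w`-weight of a monomial of `f`. -/
noncomputable def MvPolynomial.weightedOrderAddValuation (w : σ → ℕ) :
    AddValuation (MvPolynomial σ R) ℕ∞ :=
  (MvPowerSeries.weightedOrderAddValuation w).comap MvPolynomial.coeToMvPowerSeries.ringHom

namespace MvPolynomial

theorem weightedOrderAddValuation_apply (w : σ → ℕ) (f : MvPolynomial σ R) :
    weightedOrderAddValuation w f = MvPowerSeries.weightedOrder w (f : MvPowerSeries σ R) :=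
  rfl

theorem weightedOrderAddValuation_le_weight (w : σ → ℕ) {f : MvPolynomial σ R} {d : σ →₀ ℕ}
    (hd : d ∈ f.support) : weightedOrderAddValuation w f ≤ Finsupp.weight w d :=
  MvPowerSeries.weightedOrder_le w <| by
    rwa [coeToMvPowerSeries.ringHom_apply, coeff_coe, ← mem_support_iff]

theorem weightedOrderAddValuation_monomial_one (w : σ → ℕ) (d : σ →₀ ℕ) :
    weightedOrderAddValuation w (monomial d (1 : R)) = Finsupp.weight w d := by
  rw [weightedOrderAddValuation_apply, coe_monomial,
    MvPowerSeries.weightedOrder_monomial_of_ne_zero w one_ne_zero]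

end MvPolynomial

end WeightedOrder

namespace AddValuation

variable {R Γ₀ : Type*} [CommRing R] [LinearOrderedAddCommMonoidWithTop Γ₀]
  [CanonicallyOrderedAdd Γ₀]
  (v : AddValuation R Γ₀)

def leIdeal (t : Γ₀) : Ideal R where
  carrier := {x | t ≤ v x}
  zero_mem' := by simp
  add_mem' hx hy := le_trans (le_min hx hy) (v.map_add _ _)
  smul_mem' c x hx := by
    change t ≤ v (c * x)
    rw [v.map_mul]
    exact le_add_left hx

variable {v}

theorem mem_leIdeal {t : Γ₀} {x : R} : x ∈ v.leIdeal t ↔ t ≤ v x := Iff.rfl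

theorem leIdeal_mul_le (t u : Γ₀) : v.leIdeal t * v.leIdeal u ≤ v.leIdeal (t + u) :=
  Ideal.mul_le.mpr fun x hx y hy => by
    rw [mem_leIdeal, v.map_mul]
    exact add_le_add hx hy

theorem pow_le_leIdeal {J : Ideal R} {t : Γ₀} (hJ : J ≤ v.leIdeal t) (m : ℕ) :
    J ^ m ≤ v.leIdeal (m • t) := by
  induction m with
  | zero =>
    rw [zero_nsmul]
    exact fun x _ => zero_le
  | succ m ih =>
    rw [pow_succ, succ_nsmul]
    exact le_trans (Ideal.mul_mono ih hJ) (leIdeal_mul_le _ _)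

end AddValuation

namespace MvPolynomial

variable {σ R : Type*} [CommSemiring R]

theorem mem_of_forall_monomial_mem {J : Ideal (MvPolynomial σ R)} {f : MvPolynomial σ R}
    (h : ∀ d ∈ f.support, monomial d (1 : R) ∈ J) : f ∈ J := by
  rw [f.as_sum]
  refine Ideal.sum_mem _ fun d hd => ?_
  rw [← mul_one (coeff d f), ← C_mul_monomial]
  exact Ideal.mul_mem_left _ _ (h d hd)

theorem monomial_mem_radical_of_support_subset {I : Ideal (MvPolynomial σ R)} {b c : σ →₀ ℕ}
    (hb : monomial b (1 : R) ∈ I) (hbc : b.support ⊆ c.support) :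
    monomial c (1 : R) ∈ I.radical := by
  refine ⟨b.degree, I.mem_of_dvd ?_ hb⟩
  rw [monomial_pow, one_pow]
  refine monomial_dvd_monomial.mpr ⟨Or.inr fun j => ?_, one_dvd _⟩
  by_cases hbj : b j = 0
  · simp [hbj]
  · have hcj : 1 ≤ c j := Nat.one_le_iff_ne_zero.mpr (Finsupp.mem_support_iff.mp
      (hbc (Finsupp.mem_support_iff.mpr hbj)))
    calc b j ≤ b.degree := Finsupp.le_degree j b
      _ ≤ b.degree * c j := Nat.le_mul_of_pos_right _ hcj
      _ = (b.degree • c) j := rfl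

def weightOffSupport (c : σ →₀ ℕ) : σ → ℕ := fun j => if c j = 0 then 1 else 0

theorem weight_weightOffSupport_self (c : σ →₀ ℕ) :
    Finsupp.weight (weightOffSupport c) c = 0 := by
  rw [Finsupp.weight_apply]
  exact Finset.sum_eq_zero fun j hj => by
    simp [weightOffSupport, Finsupp.mem_support_iff.mp hj]

theorem weight_weightOffSupport_le_degree (c d : σ →₀ ℕ) :
    Finsupp.weight (weightOffSupport c) d ≤ d.degree := by
  rw [Finsupp.weight_apply, Finsupp.degree_apply]
  exact Finset.sum_le_sum fun j _ => by
    by_cases h : c j = 0 <;> simp [weightOffSupport, h]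

end MvPolynomial

section MonomialIdeal

variable {K : Type} [Field K] {n : ℕ}

theorem le_intCl (J : Ideal (MvPolynomial (Fin n) K)) : J ≤ intCl J := fun f hf =>
  Ideal.subset_span ⟨1, le_rfl, fun _ => -f, by simpa using neg_mem hf, by simp⟩

/-- A root `f` of value `m < t` would make `f ^ k`, of value `k * m`, equal to a sum of terms
of value `> k * m`. -/
theorem intCl_le_leIdeal {v : AddValuation (MvPolynomial (Fin n) K) ℕ∞}
    {J : Ideal (MvPolynomial (Fin n) K)} {t : ℕ}
    (hJ : J ≤ v.leIdeal t) : intCl J ≤ v.leIdeal t := by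
  refine Ideal.span_le.mpr ?_
  rintro f ⟨k, -, c, hc, hf⟩
  by_contra hlt
  obtain ⟨m, hm⟩ : ∃ m : ℕ, v f = m :=
    ENat.ne_top_iff_exists.mp (ne_top_of_lt (not_le.mp hlt)) |>.imp fun _ h => h.symm
  have hmt : m < t := by
    rw [SetLike.mem_coe, AddValuation.mem_leIdeal, hm, not_le] at hlt
    exact_mod_cast hlt
  have hterm :
      ∀ i ∈ Finset.Icc 1 k, ((k * m + 1 : ℕ) : ℕ∞) ≤ v (c i * f ^ (k - i)) := by
    intro i hi
    obtain ⟨hi1, hik⟩ := Finset.mem_Icc.mp hi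
    have hci : i • (t : ℕ∞) ≤ v (c i) := AddValuation.pow_le_leIdeal hJ i (hc i hi)
    have hsplit : i * m + (k - i) * m = k * m := by rw [← add_mul, Nat.add_sub_cancel' hik]
    have hgrow : i * (m + 1) ≤ i * t := Nat.mul_le_mul_left i hmt
    rw [v.map_mul, v.map_pow, hm]
    calc ((k * m + 1 : ℕ) : ℕ∞) ≤ ((i * t + (k - i) * m : ℕ) : ℕ∞) := by
          exact_mod_cast (by nlinarith)
      _ = i • (t : ℕ∞) + (k - i) • (m : ℕ∞) := by
            rw [Nat.cast_add, Nat.cast_mul, Nat.cast_mul, nsmul_eq_mul, nsmul_eq_mul]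
      _ ≤ v (c i) + (k - i) • (m : ℕ∞) := add_le_add hci le_rfl
  have hfk : v (f ^ k) = v (∑ i ∈ Finset.Icc 1 k, c i * f ^ (k - i)) := by
    rw [eq_neg_of_add_eq_zero_left hf, v.map_neg]
  have hlow := v.map_le_sum hterm
  rw [← hfk, v.map_pow, hm, nsmul_eq_mul] at hlow
  exact absurd (by exact_mod_cast hlow : k * m + 1 ≤ k * m) (Nat.not_succ_le_self _)

theorem exists_minGens_le {I : Ideal (MvPolynomial (Fin n) K)} {a : Fin n →₀ ℕ}
    (ha : monomial a (1 : K) ∈ I) : ∃ b ∈ minGens I, b ≤ a := by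
  obtain ⟨b, ⟨hba, hbI⟩, hmin⟩ :=
    wellFounded_lt.has_min {b | b ≤ a ∧ monomial b (1 : K) ∈ I} ⟨a, le_rfl, ha⟩
  exact ⟨b, ⟨hbI, fun b' hb' hne hb'I =>
    hmin b' ⟨hb'.trans hba, hb'I⟩ (lt_of_le_of_ne hb' hne)⟩, hba⟩

/-- Every minimal generator of `I` involves a variable outside the support of `c`, with
exponent at least `γ(I)`; otherwise it would divide a power of `x^c`. -/
theorem le_leIdeal_gammaI_of_monomial_notMem_radical {I : Ideal (MvPolynomial (Fin n) K)}
    (hmon : IsMonomialIdeal I) {c : Fin n →₀ ℕ} (hc : monomial c (1 : K) ∉ I.radical) :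
    I ≤ (weightedOrderAddValuation (weightOffSupport c)).leIdeal (gammaI I) := by
  obtain ⟨A, hA⟩ := hmon
  conv_lhs => rw [hA]
  refine Ideal.span_le.mpr ?_
  rintro _ ⟨a, haA, rfl⟩
  have haI : monomial a (1 : K) ∈ I := by rw [hA]; exact Ideal.subset_span ⟨a, haA, rfl⟩
  obtain ⟨b, hb, hba⟩ := exists_minGens_le haI
  obtain ⟨j, hbj, hcj⟩ : ∃ j, b j ≠ 0 ∧ c j = 0 := by
    by_contra! h
    exact hc (monomial_mem_radical_of_support_subset hb.1 fun j hj =>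
      Finsupp.mem_support_iff.mpr (h j (Finsupp.mem_support_iff.mp hj)))
  rw [SetLike.mem_coe, AddValuation.mem_leIdeal, weightedOrderAddValuation_monomial_one,
    Nat.cast_le]
  calc gammaI I ≤ b j := Nat.sInf_le ⟨b, hb, j, hbj, rfl⟩
    _ ≤ a j := hba j
    _ ≤ Finsupp.weight (weightOffSupport c) a :=
      Finsupp.le_weight _ (by simp [weightOffSupport, hcj]) a

theorem mem_radical_of_mul_monomial_mem_intCl {I : Ideal (MvPolynomial (Fin n) K)}
    (hmon : IsMonomialIdeal I) {s : ℕ} {a : Fin n →₀ ℕ} (ha : a.degree < gammaI I * s)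
    {f : MvPolynomial (Fin n) K} (hf : f * monomial a 1 ∈ intCl (I ^ s)) : f ∈ I.radical := by
  by_contra hfI
  obtain ⟨c, hcf, hc⟩ : ∃ c ∈ f.support, monomial c (1 : K) ∉ I.radical := by
    by_contra! h
    exact hfI (mem_of_forall_monomial_mem h)
  set v := weightedOrderAddValuation (R := K) (weightOffSupport c)
  have hpow : I ^ s ≤ v.leIdeal ((gammaI I * s : ℕ) : ℕ∞) := by
    have := AddValuation.pow_le_leIdeal (le_leIdeal_gammaI_of_monomial_notMem_radical hmon hc) s
    rwa [nsmul_eq_mul, mul_comm, ← Nat.cast_mul] at this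
  have hvf : v f = 0 := nonpos_iff_eq_zero.mp <|
    (weightedOrderAddValuation_le_weight _ hcf).trans (by rw [weight_weightOffSupport_self]; rfl)
  have hval := intCl_le_leIdeal hpow hf
  rw [AddValuation.mem_leIdeal, v.map_mul, hvf, zero_add,
    weightedOrderAddValuation_monomial_one, Nat.cast_le] at hval
  exact absurd (hval.trans (weight_weightOffSupport_le_degree c a)) (not_le.mpr ha)

end MonomialIdeal

theorem radical_colon_intCl_pow_eq_general {K : Type} [Field K] {n : ℕ}
    (I : Ideal (MvPolynomial (Fin n) K))
    (hmon : IsMonomialIdeal I)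
    (s : ℕ) (hs : 1 ≤ s) (a : Fin n →₀ ℕ)
    (ha : (∑ i, (a i : ℤ)) ≤ (gammaI I : ℤ) * (s : ℤ) - 1) :
    Ideal.radical ((intCl (I ^ s)).colon (Ideal.span {monomial a (1 : K)})) =
      Ideal.radical I := by
  apply le_antisymm
  · refine Ideal.radical_le_radical_iff.mpr fun f hf => ?_
    refine mem_radical_of_mul_monomial_mem_intCl hmon ?_ (Ideal.mem_colon_span_singleton.mp hf)
    rw [Finsupp.degree_eq_sum]
    zify
    omega
  · rw [← Ideal.radical_pow I (by omega : s ≠ 0)]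
    exact Ideal.radical_mono ((le_intCl _).trans Ideal.le_colon)

/-- For a proper nonzero monomial ideal `I`, an integer `s ≥ 1` and a
vector `a ∈ ℕ^n` with `|a| ≤ γ(I)·s - 1`, one has `√(\overline{Iˢ} : xᵃ) = √I`. -/
theorem radical_colon_intCl_pow_eq {K : Type} [Field K] {n : ℕ}
    (I : Ideal (MvPolynomial (Fin n) K))
    (hmon : IsMonomialIdeal I) (hbot : I ≠ ⊥) (htop : I ≠ ⊤)
    (s : ℕ) (hs : 1 ≤ s) (a : Fin n →₀ ℕ)
    (ha : (∑ i, (a i : ℤ)) ≤ (gammaI I : ℤ) * (s : ℤ) - 1) :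
    Ideal.radical ((intCl (I ^ s)).colon (Ideal.span {monomial a (1 : K)})) =
      Ideal.radical I :=
  radical_colon_intCl_pow_eq_general I hmon s hs a ha
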